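/- arXiv:1703.08038 — 3 statements merged into one kernel-verified Lean document; each statement's English description precedes it below -/
import Mathlib

section
/- Let V(x,y) = A_s x·∂_x + A_u y·∂_y on ℝ^r × ℝ^{n-r} with A_s, A_u real diagonalizable matrices. For a multi-index α = (α_x, α_y), the distribution u_α(x,y) = δ₀^{(α_x)}(x) y^{α_y} satisfies the eigenvalue equation -L_V u_α = λ_α u_α, where L_V is the Lie derivative (transport operator) and λ_α = -tr(A_s) - α_x · (eigenvalues of A_s) - α_y · (eigenvalues of A_u), in the sense that for all t, the pullback by the linear flow e^{tV} scales u_α by e^{t λ_α}. -/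
open MeasureTheory

/-- Directional derivative operator on functions. -/
noncomputable def pderivDir {E : Type*} [NormedAddCommGroup E] [NormedSpace ℝ E]
    (v : E) (f : E → ℝ) : E → ℝ := fun x => fderiv ℝ f x v

/-- Iterated partial derivatives `∂_x^{α}` in the first (stable) group of coordinates,
according to the multi-index `α`. -/
noncomputable def multiPD {r s : ℕ} (α : Fin r → ℕ)
    (f : (Fin r → ℝ) × (Fin s → ℝ) → ℝ) : (Fin r → ℝ) × (Fin s → ℝ) → ℝ :=
  ((List.ofFn fun j : Fin r =>
    (pderivDir ((Pi.single j (1:ℝ), 0) : (Fin r → ℝ) × (Fin s → ℝ)))^[α j]).foldr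
      (· ∘ ·) id) f

/-- The pairing `⟨δ₀^{(α_x)}(x) y^{α_y}, ψ⟩ = (-1)^{|α_x|} ∫ y^{α_y} (∂_x^{α_x}ψ)(0,y) dy`
of the distribution `u_α(x,y) = δ₀^{(α_x)}(x) y^{α_y}` with a test function `ψ`. -/
noncomputable def diracPairing {r s : ℕ} (αx : Fin r → ℕ) (αy : Fin s → ℕ)
    (ψ : (Fin r → ℝ) × (Fin s → ℝ) → ℝ) : ℝ :=
  (-1 : ℝ) ^ (∑ j, αx j) *
    ∫ y : Fin s → ℝ, (∏ j, (y j) ^ (αy j)) * multiPD αx ψ (0, y)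

section Aux

variable {r s : ℕ}

local notation "E" => (Fin r → ℝ) × (Fin s → ℝ)

/-- The diagonal scaling map as a continuous linear map. -/
noncomputable def scaleL (a : Fin r → ℝ) (b : Fin s → ℝ) : E →L[ℝ] E :=
  LinearMap.toContinuousLinearMap
  { toFun := fun p => (fun j => a j * p.1 j, fun j => b j * p.2 j)
    map_add' := by intro p q; ext j <;> simp [mul_add]
    map_smul' := by intro c p; ext j <;> simp [mul_comm, mul_left_comm] }

@[simp] lemma scaleL_apply (a : Fin r → ℝ) (b : Fin s → ℝ) (p : E) :
    scaleL a b p = (fun j => a j * p.1 j, fun j => b j * p.2 j) := rfl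

/-- An operator `g` on functions is "good" for a linear map `L` with constant `c`. -/
def GoodOp (L : E →L[ℝ] E) (g : (E → ℝ) → E → ℝ) (c : ℝ) : Prop :=
  ∀ f : E → ℝ, ContDiff ℝ (⊤ : ℕ∞) f →
    ContDiff ℝ (⊤ : ℕ∞) (g f) ∧
    (∀ d : ℝ, g (fun p => d * f p) = fun p => d * g f p) ∧
    g (fun p => f (L p)) = fun p => c * g f (L p)

lemma goodOp_id (L : E →L[ℝ] E) : GoodOp L id 1 := by
  intro f hf
  refine ⟨hf, fun d => rfl, ?_⟩
  simp

lemma goodOp_pderivDir (L : E →L[ℝ] E) (v : E) (c : ℝ) (hv : L v = c • v) :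
    GoodOp L (pderivDir v) c := by
  intro f hf
  refine ⟨(hf.fderiv_right (by simp)).clm_apply contDiff_const, ?_, ?_⟩
  · intro d
    funext p
    have h1 : fderiv ℝ (fun q => d * f q) p = d • fderiv ℝ f p :=
      fderiv_const_mul (hf.differentiable (by simp) p) d
    simp [pderivDir, h1]
  · funext p
    have hfL : fderiv ℝ (f ∘ ⇑L) p = (fderiv ℝ f (L p)).comp (fderiv ℝ (⇑L) p) :=
      fderiv_comp p (hf.differentiable (by simp) (L p)) L.differentiableAt
    have h2 : fderiv ℝ (⇑L) p = L := L.fderiv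
    have : pderivDir v (fun q => f (L q)) p = fderiv ℝ f (L p) (L v) := by
      show fderiv ℝ (f ∘ ⇑L) p v = _
      rw [hfL, h2]; rfl
    rw [this, hv]
    simp [pderivDir, mul_comm]

lemma goodOp_comp {L : E →L[ℝ] E} {g h : (E → ℝ) → E → ℝ} {c d : ℝ}
    (hg : GoodOp L g c) (hh : GoodOp L h d) : GoodOp L (g ∘ h) (c * d) := by
  intro f hf
  obtain ⟨hh1, hh2, hh3⟩ := hh f hf
  obtain ⟨hg1, hg2, hg3⟩ := hg (h f) hh1
  refine ⟨hg1, ?_, ?_⟩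
  · intro e
    simp only [Function.comp_apply, hh f hf |>.2.1 e, hg2 e]
  · calc g (h (fun p => f (L p))) = g (fun p => d * h f (L p)) := by rw [hh3]
      _ = fun p => d * g (fun p => h f (L p)) p := by
          rw [(hg (fun p => h f (L p)) (hh1.comp L.contDiff)).2.1 d]
      _ = fun p => (c * d) * g (h f) (L p) := by
          funext p; rw [hg3]; ring

lemma goodOp_iterate {L : E →L[ℝ] E} {g : (E → ℝ) → E → ℝ} {c : ℝ}
    (hg : GoodOp L g c) : ∀ k : ℕ, GoodOp L g^[k] (c ^ k) := by
  intro k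
  induction k with
  | zero => simpa using goodOp_id L
  | succ n ih =>
      have := goodOp_comp hg ih
      rw [Function.iterate_succ']
      convert this using 1
      ring

lemma goodOp_foldr {L : E →L[ℝ] E} :
    ∀ {l : List ((E → ℝ) → E → ℝ)} {cs : List ℝ},
      List.Forall₂ (GoodOp L) l cs → GoodOp L (l.foldr (· ∘ ·) id) cs.prod := by
  intro l cs h
  induction h with
  | nil => simpa using goodOp_id L
  | @cons g c l' cs' hgc _ ih =>
      simpa using goodOp_comp hgc ih

lemma goodOp_multiPD (L : E →L[ℝ] E) (αx : Fin r → ℕ) (c : Fin r → ℝ)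
    (hv : ∀ j, L (Pi.single j 1, 0) = c j • ((Pi.single j 1, 0) : E)) :
    GoodOp L (multiPD αx) (∏ j, c j ^ αx j) := by
  have h2 : List.Forall₂ (GoodOp L)
      (List.ofFn fun j : Fin r => (pderivDir ((Pi.single j (1:ℝ), 0) : E))^[αx j])
      (List.ofFn fun j : Fin r => c j ^ αx j) := by
    rw [List.forall₂_iff_get]
    constructor
    · simp
    · intro i h1 h2'
      simp only [List.get_ofFn]
      exact goodOp_iterate (goodOp_pderivDir L _ _ (hv _)) _
  have h3 := goodOp_foldr h2
  rw [List.prod_ofFn] at h3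
  exact h3

/-- Change of variables for a positive diagonal scaling on `ℝ^s`. -/
lemma integral_comp_diag (b : Fin s → ℝ) (hb : ∀ j, 0 < b j)
    (H : (Fin s → ℝ) → ℝ) (hH : Continuous H) :
    ∫ y : Fin s → ℝ, H (fun j => b j * y j) = (∏ j, b j)⁻¹ * ∫ z, H z := by
  classical
  set T := Matrix.toLin' (Matrix.diagonal b) with hT
  have hTapp : ∀ y, T y = fun j => b j * y j := by
    intro y; funext j
    simp [hT, Matrix.toLin'_apply, Matrix.mulVec_diagonal]
  have hdet : (Matrix.diagonal b).det ≠ 0 := by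
    rw [Matrix.det_diagonal]
    exact Finset.prod_ne_zero_iff.mpr fun j _ => (hb j).ne'
  have hmap := Real.map_matrix_volume_pi_eq_smul_volume_pi hdet
  have hTmeas : AEMeasurable T volume :=
    (T.continuous_of_finiteDimensional).measurable.aemeasurable
  have h1 : ∫ z, H z ∂(Measure.map T volume) = ∫ y, H (T y) :=
    integral_map hTmeas hH.aestronglyMeasurable
  have h0 : (fun y : Fin s → ℝ => H fun j => b j * y j) = fun y => H (T y) := by
    funext y; rw [hTapp]
  rw [h0, ← h1, hmap, integral_smul_measure]
  have hprod : (0:ℝ) ≤ ∏ j, b j := Finset.prod_nonneg fun j _ => (hb j).le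
  rw [Matrix.det_diagonal, abs_of_nonneg (inv_nonneg.mpr hprod),
    ENNReal.toReal_ofReal (inv_nonneg.mpr hprod), smul_eq_mul]

end Aux

/-- For the linear hyperbolic vector field
`V(x,y) = A_s x·∂_x + A_u y·∂_y` on `ℝ^r × ℝ^{n-r}` with `A_s = diag(χ_s)` (negative
entries) and `A_u = diag(χ_u)` (positive entries), the distribution
`u_α(x,y) = δ₀^{(α_x)}(x) y^{α_y}` satisfies `-L_V u_α = λ_α u_α` with
`λ_α = -∑_j |χ_s(j)| + ∑_j (α_x)_j χ_s(j) - ∑_j (α_y)_j χ_u(j)`, in the sense that the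
pullback of `u_α` by the flow `φ^{-t}` (including the Jacobian factor
`|det Dφ^{-t}|⁻¹ = e^{t(∑χ_s + ∑χ_u)}`) scales `u_α` by `e^{tλ_α}`, i.e. testing against
any smooth compactly supported `ψ`. -/


theorem stmt_8 (r s : ℕ) (χs : Fin r → ℝ) (χu : Fin s → ℝ)
    (hs : ∀ j, χs j < 0) (hu : ∀ j, 0 < χu j)
    (αx : Fin r → ℕ) (αy : Fin s → ℕ) :
    ∀ t : ℝ, ∀ ψ : (Fin r → ℝ) × (Fin s → ℝ) → ℝ,
      ContDiff ℝ (⊤ : ℕ∞) ψ → HasCompactSupport ψ →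
      Real.exp (t * ((∑ j, χs j) + ∑ j, χu j)) *
        diracPairing αx αy (fun p =>
          ψ (fun j => Real.exp (t * χs j) * p.1 j, fun j => Real.exp (t * χu j) * p.2 j))
      = Real.exp (t * ((-∑ j, |χs j|) + (∑ j, (αx j : ℝ) * χs j)
          - ∑ j, (αy j : ℝ) * χu j)) * diracPairing αx αy ψ := by
  classical
  intro t ψ hψ _
  set a : Fin r → ℝ := fun j => Real.exp (t * χs j) with ha
  set b : Fin s → ℝ := fun j => Real.exp (t * χu j) with hb
  have hvj : ∀ j : Fin r, scaleL a b (Pi.single j 1, 0)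
      = a j • ((Pi.single j 1, 0) : (Fin r → ℝ) × (Fin s → ℝ)) := by
    intro j
    refine Prod.ext ?_ ?_
    · funext k
      by_cases hkj : k = j <;> simp [hkj, Pi.single_apply]
    · funext k; simp
  obtain ⟨hM, -, hcomp⟩ := goodOp_multiPD (scaleL a b) αx a hvj ψ hψ
  set C := ∏ j, a j ^ αx j with hC
  set M := multiPD αx ψ with hMdef
  simp only [scaleL_apply] at hcomp
  have hgoalfun : (fun p : (Fin r → ℝ) × (Fin s → ℝ) =>
      ψ (fun j => Real.exp (t * χs j) * p.1 j, fun j => Real.exp (t * χu j) * p.2 j))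
      = fun p => ψ (fun j => a j * p.1 j, fun j => b j * p.2 j) := rfl
  rw [hgoalfun]
  simp only [diracPairing]
  rw [hcomp]
  have hz : ∀ y : Fin s → ℝ,
      ((fun j => a j * ((0 : Fin r → ℝ), y).1 j, fun j => b j * ((0 : Fin r → ℝ), y).2 j)
        : (Fin r → ℝ) × (Fin s → ℝ)) = ((0 : Fin r → ℝ), fun j => b j * y j) := by
    intro y
    refine Prod.ext ?_ rfl
    funext j; simp
  simp only [hz]
  set H : (Fin s → ℝ) → ℝ := fun z => (∏ j, z j ^ αy j) * M (0, z) with hH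
  have hHcont : Continuous H := by
    apply Continuous.mul
    · exact continuous_finset_prod _ fun j _ => (continuous_apply j).pow _
    · exact hM.continuous.comp (continuous_const.prodMk continuous_id)
  have hbpos : ∀ j, 0 < b j := fun j => Real.exp_pos _
  have hPpos : 0 < ∏ j, b j ^ αy j := Finset.prod_pos fun j _ => pow_pos (hbpos j) _
  have hptwise : ∀ y : Fin s → ℝ,
      (∏ j, y j ^ αy j) * (C * M (0, fun j => b j * y j))
      = (C * (∏ j, b j ^ αy j)⁻¹) * H (fun j => b j * y j) := by
    intro y
    have h1 : H (fun j => b j * y j)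
        = (∏ j, (b j * y j) ^ αy j) * M (0, fun j => b j * y j) := rfl
    rw [h1]
    simp only [mul_pow, Finset.prod_mul_distrib]
    field_simp
  simp only [hptwise]
  rw [MeasureTheory.integral_const_mul, integral_comp_diag b hbpos H hHcont]
  have hC2 : C = Real.exp (t * ∑ j, (αx j : ℝ) * χs j) := by
    calc C = ∏ j, Real.exp ((αx j : ℝ) * (t * χs j)) := by
          refine Finset.prod_congr rfl fun j _ => ?_
          rw [Real.exp_nat_mul]
      _ = Real.exp (∑ j, (αx j : ℝ) * (t * χs j)) := (Real.exp_sum _ _).symm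
      _ = Real.exp (t * ∑ j, (αx j : ℝ) * χs j) := by
          rw [Finset.mul_sum]
          congr 1
          exact Finset.sum_congr rfl fun j _ => by ring
  have hP2 : (∏ j, b j ^ αy j) = Real.exp (t * ∑ j, (αy j : ℝ) * χu j) := by
    calc (∏ j, b j ^ αy j) = ∏ j, Real.exp ((αy j : ℝ) * (t * χu j)) := by
          refine Finset.prod_congr rfl fun j _ => ?_
          rw [Real.exp_nat_mul]
      _ = Real.exp (∑ j, (αy j : ℝ) * (t * χu j)) := (Real.exp_sum _ _).symm
      _ = Real.exp (t * ∑ j, (αy j : ℝ) * χu j) := by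
          rw [Finset.mul_sum]
          congr 1
          exact Finset.sum_congr rfl fun j _ => by ring
  have hB2 : (∏ j, b j) = Real.exp (t * ∑ j, χu j) := by
    rw [Finset.mul_sum, ← Real.exp_sum]
  have habs : (∑ j, |χs j|) = -∑ j, χs j := by
    rw [← Finset.sum_neg_distrib]
    exact Finset.sum_congr rfl fun j _ => abs_of_neg (hs j)
  have hscalar : Real.exp (t * ((∑ j, χs j) + ∑ j, χu j))
      * (C * (∏ j, b j ^ αy j)⁻¹ * (∏ j, b j)⁻¹)
      = Real.exp (t * ((-∑ j, |χs j|) + (∑ j, (αx j : ℝ) * χs j)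
          - ∑ j, (αy j : ℝ) * χu j)) := by
    rw [hC2, hP2, hB2]
    simp only [← Real.exp_neg, ← Real.exp_add]
    rw [Real.exp_eq_exp, habs]
    ring
  linear_combination ((-1 : ℝ) ^ (∑ j, αx j) * (∫ z, H z)) * hscalar
end

section
/- Let P : [0,∞) → ℂ be a polynomial and λ ∈ ℂ. Suppose e^{λt}P(t) = ∑_{j=1}^m c_j e^{μ_j t} + R(t) for all t ≥ 0, where the μ_j are distinct complex numbers and R : [0,∞) → ℂ is continuous with |R(t)| ≤ C e^{(Re λ - ε)t} for some ε > 0. If e^{λt}P(t) is not identically of smaller growth (i.e., P ≠ 0), then λ = μ_j for some j, P is constant, and P(0) = c_j. -/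
/-!
Dividing by `e^{λt}` gives `P(t) = ∑ c_j e^{ν_j t} + r(t)` with `ν_j = μ_j - λ`, `Re ν_j ≤ 0` and
`r(t) = O(e^{-εt})`. The right-hand side is bounded on `[0, ∞)`, so `P` is a constant `a`. Then
`a - ∑ c_j e^{ν_j t}` is integrable on `(0, ∞)`, so its Cesàro means `T⁻¹ ∫₀ᵀ` tend to `0`; but the
mean of `e^{νt}` tends to `1` if `ν = 0` and to `0` otherwise, so `a` is the sum of the `c_j` with
`μ_j = λ`. As `a ≠ 0` there is such a `j`, and it is unique because the `μ_j` are distinct.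
-/

open Filter Topology MeasureTheory Set Polynomial

lemma Complex.norm_exp_mul_ofReal_le_one {ν : ℂ} (hν : ν.re ≤ 0) {t : ℝ} (ht : 0 ≤ t) :
    ‖Complex.exp (ν * t)‖ ≤ 1 := by
  rw [Complex.norm_exp, Complex.re_mul_ofReal]
  exact Real.exp_le_one_iff.2 (mul_nonpos_of_nonpos_of_nonneg hν ht)

lemma Polynomial.degree_le_zero_of_eventually_norm_eval_ofReal_le (P : ℂ[X]) {M : ℝ}
    (h : ∀ᶠ t : ℝ in atTop, ‖P.eval (t : ℂ)‖ ≤ M) : P.degree ≤ 0 := by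
  by_contra! hP
  have hnorm : Tendsto (fun t : ℝ => ‖(t : ℂ)‖) atTop atTop := by
    simpa only [Complex.norm_real, Real.norm_eq_abs] using tendsto_abs_atTop_atTop
  obtain ⟨t, hle, hgt⟩ := (h.and ((P.tendsto_norm_atTop hP hnorm).eventually_gt_atTop M)).exists
  exact hle.not_gt hgt

lemma norm_sum_mul_cexp_le {ι : Type*} [Fintype ι] {ν : ι → ℂ} (hν : ∀ j, (ν j).re ≤ 0)
    (c : ι → ℂ) {t : ℝ} (ht : 0 ≤ t) : ‖∑ j, c j * Complex.exp (ν j * t)‖ ≤ ∑ j, ‖c j‖ :=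
  (norm_sum_le _ _).trans <| Finset.sum_le_sum fun j _ => by
    rw [norm_mul]
    exact mul_le_of_le_one_right (norm_nonneg _) (Complex.norm_exp_mul_ofReal_le_one (hν j) ht)

lemma integrableOn_Ioi_of_norm_le_mul_exp {E : Type*} [NormedAddCommGroup E] {g : ℝ → E}
    {a b C : ℝ} (hb : 0 < b) (hg : AEStronglyMeasurable g (volume.restrict (Ioi a)))
    (h : ∀ t, a < t → ‖g t‖ ≤ C * Real.exp (-b * t)) : IntegrableOn g (Ioi a) :=
  ((exp_neg_integrableOn_Ioi a hb).const_mul C).mono' hg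
    ((ae_restrict_mem measurableSet_Ioi).mono h)

lemma tendsto_inv_smul_intervalIntegral_of_integrableOn_Ioi {E : Type*} [NormedAddCommGroup E]
    [NormedSpace ℝ E] {g : ℝ → E} {a : ℝ} (hg : IntegrableOn g (Ioi a)) :
    Tendsto (fun T : ℝ => T⁻¹ • ∫ t in a..T, g t) atTop (𝓝 0) := by
  simpa using tendsto_inv_atTop_zero.smul (intervalIntegral_tendsto_integral_Ioi a hg tendsto_id)

lemma tendsto_inv_smul_intervalIntegral_cexp {ν : ℂ} (hν : ν.re ≤ 0) :
    Tendsto (fun T : ℝ => T⁻¹ • ∫ t in (0 : ℝ)..T, Complex.exp (ν * t)) atTop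
      (𝓝 (if ν = 0 then 1 else 0)) := by
  split_ifs with hν0
  · refine tendsto_const_nhds.congr' ?_
    filter_upwards [eventually_ne_atTop 0] with T hT
    simp [hν0, hT]
  · refine tendsto_inv_atTop_zero.zero_smul_isBoundedUnder_le ⟨2 / ‖ν‖, eventually_map.2 ?_⟩
    filter_upwards [eventually_ge_atTop (0 : ℝ)] with T hT
    have hnum : ‖Complex.exp (ν * T) - 1‖ ≤ 2 := calc
      ‖Complex.exp (ν * T) - 1‖ ≤ ‖Complex.exp (ν * T)‖ + ‖(1 : ℂ)‖ := norm_sub_le _ _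
      _ ≤ 1 + 1 := by gcongr; exacts [Complex.norm_exp_mul_ofReal_le_one hν hT, norm_one.le]
      _ = 2 := by norm_num
    simp only [Function.comp_apply, integral_exp_mul_complex hν0, Complex.ofReal_zero, mul_zero,
      Complex.exp_zero, norm_div]
    gcongr

lemma eq_sum_ite_of_integrableOn_sub_sum_cexp {ι : Type*} [Fintype ι] {ν c : ι → ℂ}
    (hν : ∀ j, (ν j).re ≤ 0) {a : ℂ}
    (h : IntegrableOn (fun t : ℝ => a - ∑ j, c j * Complex.exp (ν j * t)) (Ioi 0)) :
    a = ∑ j, if ν j = 0 then c j else 0 := by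
  have hmeans : Tendsto (fun T : ℝ => a - ∑ j, c j * T⁻¹ • ∫ t in (0 : ℝ)..T,
      Complex.exp (ν j * t)) atTop (𝓝 (a - ∑ j, c j * if ν j = 0 then 1 else 0)) :=
    tendsto_const_nhds.sub <| tendsto_finsetSum _ fun j _ =>
      (tendsto_inv_smul_intervalIntegral_cexp (hν j)).const_mul (c j)
  have hmean_eq : (fun T : ℝ => a - ∑ j, c j * T⁻¹ • ∫ t in (0 : ℝ)..T, Complex.exp (ν j * t))
      =ᶠ[atTop] fun T => T⁻¹ • ∫ t in (0 : ℝ)..T, a - ∑ j, c j * Complex.exp (ν j * t) := by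
    filter_upwards [eventually_ne_atTop 0] with T hT
    have hint : ∀ j, IntervalIntegrable (fun t : ℝ => c j * Complex.exp (ν j * t)) volume 0 T :=
      fun j => (by fun_prop : Continuous _).intervalIntegrable _ _
    have hsum : IntervalIntegrable (fun t : ℝ => ∑ j, c j * Complex.exp (ν j * t)) volume 0 T :=
      (by fun_prop : Continuous _).intervalIntegrable _ _
    rw [intervalIntegral.integral_sub intervalIntegrable_const hsum,
      intervalIntegral.integral_finsetSum fun j _ => hint j, smul_sub, Finset.smul_sum,
      intervalIntegral.integral_const]
    simp only [intervalIntegral.integral_const_mul, sub_zero, smul_smul, inv_mul_cancel₀ hT,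
      one_smul, mul_smul_comm]
  have hzero := tendsto_nhds_unique (hmeans.congr' hmean_eq)
    (tendsto_inv_smul_intervalIntegral_of_integrableOn_Ioi h)
  simpa [sub_eq_zero] using hzero

lemma Function.Injective.exists_eq_and_sum_ite_eq {ι α M : Type*} [Fintype ι] [DecidableEq α]
    [AddCommMonoid M] {f : ι → α} (hf : f.Injective) {b : α} {c : ι → M}
    (h : (∑ j, if f j = b then c j else 0) ≠ 0) :
    ∃ j, f j = b ∧ (∑ i, if f i = b then c i else 0) = c j := by
  obtain ⟨j, -, hj⟩ := Finset.exists_ne_zero_of_sum_ne_zero h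
  have hfj : f j = b := by_contra fun hne => hj (if_neg hne)
  refine ⟨j, hfj, (Finset.sum_eq_single j (fun i _ hij => if_neg fun hfi => ?_) (by simp)).trans
    (if_pos hfj)⟩
  exact hij (hf (hfi.trans hfj.symm))

lemma exists_eq_zero_and_eq_C_of_eval_eq_sum_cexp_add {ι : Type*} [Fintype ι] {P : ℂ[X]}
    (hP : P ≠ 0) {ν : ι → ℂ} (hν : ν.Injective) (hνre : ∀ j, (ν j).re ≤ 0) (c : ι → ℂ)
    {r : ℝ → ℂ} {C ε : ℝ} (hε : 0 < ε) (hr : ∀ t : ℝ, 0 ≤ t → ‖r t‖ ≤ C * Real.exp (-ε * t))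
    (hP_eq : ∀ t : ℝ, 0 ≤ t → P.eval (t : ℂ) = ∑ j, c j * Complex.exp (ν j * t) + r t) :
    ∃ j, ν j = 0 ∧ P = Polynomial.C (c j) := by
  have hbounded : ∀ᶠ t : ℝ in atTop, ‖P.eval (t : ℂ)‖ ≤ ∑ j, ‖c j‖ + |C| := by
    filter_upwards [eventually_ge_atTop 0] with t ht
    rw [hP_eq t ht]
    refine (norm_add_le _ _).trans (add_le_add (norm_sum_mul_cexp_le hνre c ht) ?_)
    calc ‖r t‖ ≤ C * Real.exp (-ε * t) := hr t ht
      _ ≤ |C| * 1 := by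
        gcongr
        · exact le_abs_self C
        · exact Real.exp_le_one_iff.2 (by nlinarith)
      _ = |C| := mul_one _
  obtain ⟨a, rfl⟩ : ∃ a, P = Polynomial.C a :=
    ⟨_, eq_C_of_degree_le_zero (P.degree_le_zero_of_eventually_norm_eval_ofReal_le hbounded)⟩
  have hintegrable : IntegrableOn (fun t : ℝ => a - ∑ j, c j * Complex.exp (ν j * t)) (Ioi 0) := by
    refine integrableOn_Ioi_of_norm_le_mul_exp (C := C) hε
      (by fun_prop : Continuous _).aestronglyMeasurable fun t ht => ?_
    rw [sub_eq_of_eq_add' (by simpa only [eval_C] using hP_eq t ht.le)]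
    exact hr t ht.le
  have ha := eq_sum_ite_of_integrableOn_sub_sum_cexp hνre hintegrable
  have ha0 : a ≠ 0 := fun h => hP (by rw [h, map_zero])
  obtain ⟨j, hj, hsum⟩ := hν.exists_eq_and_sum_ite_eq (ha ▸ ha0)
  exact ⟨j, hj, by rw [ha, hsum]⟩

theorem stmt_10_general (m : ℕ) (P : Polynomial ℂ) (hP : P ≠ 0) (lam : ℂ)
    (μ : Fin m → ℂ) (hμ : Function.Injective μ) (hμre : ∀ j, (μ j).re ≤ lam.re)
    (c : Fin m → ℂ) (R : ℝ → ℂ)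
    (C ε : ℝ) (hε : 0 < ε)
    (hR : ∀ t : ℝ, 0 ≤ t → ‖R t‖ ≤ C * Real.exp ((lam.re - ε) * t))
    (heq : ∀ t : ℝ, 0 ≤ t →
      Complex.exp (lam * t) * P.eval (t : ℂ)
        = (∑ j, c j * Complex.exp (μ j * t)) + R t) :
    ∃ j, lam = μ j ∧ ∃ a : ℂ, P = Polynomial.C a ∧ a = c j := by
  set r : ℝ → ℂ := fun t => Complex.exp (-lam * t) * R t
  have hr : ∀ t : ℝ, 0 ≤ t → ‖r t‖ ≤ C * Real.exp (-ε * t) := fun t ht => calc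
    ‖r t‖ ≤ Real.exp (-lam.re * t) * (C * Real.exp ((lam.re - ε) * t)) := by
      simp only [r, norm_mul, Complex.norm_exp, Complex.re_mul_ofReal, Complex.neg_re]
      gcongr
      exact hR t ht
    _ = C * Real.exp (-ε * t) := by rw [mul_left_comm, ← Real.exp_add]; ring_nf
  have hP_eq : ∀ t : ℝ, 0 ≤ t →
      P.eval (t : ℂ) = ∑ j, c j * Complex.exp ((μ j - lam) * t) + r t := by
    intro t ht
    rw [← mul_right_inj' (Complex.exp_ne_zero (lam * t)), heq t ht, mul_add, Finset.mul_sum]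
    congr 1
    · refine Finset.sum_congr rfl fun j _ => ?_
      rw [mul_left_comm, ← Complex.exp_add]
      ring_nf
    · simp only [r, ← mul_assoc, ← Complex.exp_add, neg_mul, add_neg_cancel, Complex.exp_zero,
        one_mul]
  obtain ⟨j, hj, rfl⟩ := exists_eq_zero_and_eq_C_of_eval_eq_sum_cexp_add hP
    ((sub_left_injective (b := lam)).comp hμ) (fun j => by simpa using hμre j) c hε hr hP_eq
  exact ⟨j, (sub_eq_zero.1 hj).symm, c j, rfl, rfl⟩

/-- Key analytic lemma identifying eigenvalues via Laplace transform.
If `e^{λt} P(t) = ∑_j c_j e^{μ_j t} + R(t)` for all `t ≥ 0`, with the `μ_j` pairwise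
distinct, `Re μ_j ≤ Re λ`, `R` continuous with `|R(t)| ≤ C e^{(Re λ - ε)t}` for some
`ε > 0`, and `P` a nonzero polynomial, then `λ = μ_j` for some `j`, `P` is constant and
`P(0) = c_j`. -/
theorem stmt_10 (m : ℕ) (P : Polynomial ℂ) (hP : P ≠ 0) (lam : ℂ)
    (μ : Fin m → ℂ) (hμ : Function.Injective μ) (hμre : ∀ j, (μ j).re ≤ lam.re)
    (c : Fin m → ℂ) (R : ℝ → ℂ) (hRcont : ContinuousOn R (Set.Ici 0))
    (C ε : ℝ) (hε : 0 < ε)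
    (hR : ∀ t : ℝ, 0 ≤ t → ‖R t‖ ≤ C * Real.exp ((lam.re - ε) * t))
    (heq : ∀ t : ℝ, 0 ≤ t →
      Complex.exp (lam * t) * P.eval (t : ℂ)
        = (∑ j, c j * Complex.exp (μ j * t)) + R t) :
    ∃ j, lam = μ j ∧ ∃ a : ℂ, P = Polynomial.C a ∧ a = c j :=
  stmt_10_general m P hP lam μ hμ hμre c R C ε hε hR heq
end

section
/- Let f : ℝ → M_N(ℂ) be continuous and P-periodic, and let U(θ) solve U' = f(θ)U, U(0) = Id. Then there exist a P-periodic continuously differentiable matrix function Q(θ) with Q(0) = Id and a constant matrix Ω with U(θ) = Q(θ) e^{θΩ}, provided the monodromy matrix U(P) admits a logarithm Ω with U(P) = e^{PΩ} (always possible over ℂ since U(P) is invertible). -/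
/-!
By uniqueness for the linear equation `X' = f X`, periodicity of `f` gives
`U (θ + P) = U θ * U P`. Hence `Q θ = U θ * exp (-θ Ω)` satisfies
`Q (θ + P) = U θ * U P * exp (-P Ω) * exp (-θ Ω) = Q θ`, and `U θ = Q θ * exp (θ Ω)`.
Moreover `Q' = f Q - Q Ω` is continuous.
-/

attribute [local instance] Matrix.normedAddCommGroup Matrix.normedSpace

open NormedSpace Set Function

section

variable {𝔸 : Type*} [NormedRing 𝔸] {f U : ℝ → 𝔸} {Ω : 𝔸} {P : ℝ}

theorem ODE_linear_solution_unique [NormedSpace ℝ 𝔸] (hf : Continuous f) {X Y : ℝ → 𝔸}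
    (hX : ∀ t, HasDerivAt X (f t * X t) t) (hY : ∀ t, HasDerivAt Y (f t * Y t) t)
    {t₀ : ℝ} (h₀ : X t₀ = Y t₀) : X = Y := by
  ext t
  obtain ⟨a, b, ht, ht₀⟩ : ∃ a b, t ∈ Ioo a b ∧ t₀ ∈ Ioo a b := by
    use min (-|t|) (-|t₀|) - 1, max |t| |t₀| + 1
    grind
  obtain ⟨C, hC⟩ := (isCompact_Icc (a := a) (b := b)).exists_bound_of_continuousOn hf.continuousOn
  have hlip : ∀ s ∈ Ioo a b, LipschitzOnWith C.toNNReal (f s * ·) univ := fun s hs =>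
    LipschitzWith.lipschitzOnWith <| LipschitzWith.of_dist_le_mul fun x y => by
      rw [dist_eq_norm, dist_eq_norm, ← mul_sub, Real.coe_toNNReal']
      exact (norm_mul_le _ _).trans <| mul_le_mul_of_nonneg_right
        ((hC s (Ioo_subset_Icc_self hs)).trans (le_max_left _ _)) (norm_nonneg _)
  exact ODE_solution_unique_of_mem_Ioo hlip ht₀ (fun s _ => ⟨hX s, mem_univ _⟩)
    (fun s _ => ⟨hY s, mem_univ _⟩) h₀ ht

variable [NormedAlgebra ℝ 𝔸]

theorem ODE_linear_solution_add_period_eq_mul (hf : Continuous f) (hfper : Periodic f P)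
    (hU0 : U 0 = 1) (hU : ∀ θ, HasDerivAt U (f θ * U θ) θ) (θ : ℝ) :
    U (θ + P) = U θ * U P := by
  have hshift : ∀ t, HasDerivAt (fun s => U (s + P)) (f t * U (t + P)) t := fun t => by
    simpa only [hfper t] using (hU (t + P)).comp_add_const t P
  have hmul : ∀ t, HasDerivAt (fun s => U s * U P) (f t * (U t * U P)) t := fun t => by
    simpa only [mul_assoc] using (hU t).mul_const (U P)
  exact congrFun (ODE_linear_solution_unique hf hshift hmul (t₀ := 0) (by simp [hU0])) θ

noncomputable def floquetFactor (U : ℝ → 𝔸) (Ω : 𝔸) (θ : ℝ) : 𝔸 :=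
  U θ * exp ((-θ) • Ω)

theorem floquetFactor_zero (hU0 : U 0 = 1) : floquetFactor U Ω 0 = 1 := by
  simp [floquetFactor, hU0]

variable [CompleteSpace 𝔸]

theorem exp_add_smul (Ω : 𝔸) (s t : ℝ) : exp ((s + t) • Ω) = exp (s • Ω) * exp (t • Ω) := by
  let +nondep : NormedAlgebra ℚ 𝔸 := .restrictScalars ℚ ℝ 𝔸
  rw [add_smul, exp_add_of_commute (((Commute.refl Ω).smul_right t).smul_left s)]

theorem exp_smul_mul_exp_neg_smul (Ω : 𝔸) (t : ℝ) : exp (t • Ω) * exp ((-t) • Ω) = 1 := by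
  rw [← exp_add_smul, add_neg_cancel, zero_smul, exp_zero]

theorem eq_floquetFactor_mul_exp (θ : ℝ) : U θ = floquetFactor U Ω θ * exp (θ • Ω) := by
  rw [floquetFactor, mul_assoc, ← exp_add_smul, neg_add_cancel, zero_smul, exp_zero, mul_one]

theorem floquetFactor_periodic (hUper : ∀ θ, U (θ + P) = U θ * U P)
    (hΩ : U P = exp (P • Ω)) : Periodic (floquetFactor U Ω) P := fun θ =>
  calc U (θ + P) * exp ((-(θ + P)) • Ω)
      = U θ * (exp (P • Ω) * exp ((-P) • Ω)) * exp ((-θ) • Ω) := by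
        rw [hUper, hΩ, neg_add_rev, exp_add_smul]; simp only [mul_assoc]
    _ = U θ * exp ((-θ) • Ω) := by rw [exp_smul_mul_exp_neg_smul, mul_one]

theorem hasDerivAt_floquetFactor {θ : ℝ} (hU : HasDerivAt U (f θ * U θ) θ) :
    HasDerivAt (floquetFactor U Ω) (f θ * floquetFactor U Ω θ - floquetFactor U Ω θ * Ω) θ := by
  have hexp := (hasDerivAt_exp_smul_const Ω (-θ)).scomp θ (hasDerivAt_neg θ)
  refine (hU.mul hexp).congr_deriv ?_
  simp only [floquetFactor, comp_apply, neg_one_smul, mul_neg, mul_assoc, sub_eq_add_neg]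

theorem exists_periodic_hasDerivAt_eq_mul_exp_smul (hf : Continuous f) (hfper : Periodic f P)
    (hU0 : U 0 = 1) (hU : ∀ θ, HasDerivAt U (f θ * U θ) θ) (hΩ : U P = exp (P • Ω)) :
    ∃ Q : ℝ → 𝔸, Periodic Q P ∧ Q 0 = 1 ∧ (∀ θ, HasDerivAt Q (f θ * Q θ - Q θ * Ω) θ) ∧
      ∀ θ, U θ = Q θ * exp (θ • Ω) :=
  ⟨floquetFactor U Ω,
    floquetFactor_periodic (ODE_linear_solution_add_period_eq_mul hf hfper hU0 hU) hΩ,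
    floquetFactor_zero hU0, fun θ => hasDerivAt_floquetFactor (hU θ), eq_floquetFactor_mul_exp⟩

end

theorem stmt_17_general (N : ℕ) (P : ℝ)
    (f : ℝ → Matrix (Fin N) (Fin N) ℂ) (hf : Continuous f)
    (hfper : ∀ θ, f (θ + P) = f θ)
    (U : ℝ → Matrix (Fin N) (Fin N) ℂ) (hU0 : U 0 = 1)
    (hUode : ∀ θ, HasDerivAt U (f θ * U θ) θ)
    (Ω : Matrix (Fin N) (Fin N) ℂ) (hΩ : U P = NormedSpace.exp (P • Ω)) :
    ∃ Q : ℝ → Matrix (Fin N) (Fin N) ℂ,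
      (∀ θ, Q (θ + P) = Q θ) ∧ Q 0 = 1 ∧ ContDiff ℝ 1 Q ∧
      ∀ θ, U θ = Q θ * NormedSpace.exp (θ • Ω) := by
  -- The entrywise sup norm is not submultiplicative, so we argue in the Banach algebra of the
  -- ℓ∞ operator norm; it has the same topology, hence the same derivatives and exponential.
  obtain ⟨Q, hQper, hQ0, hQ', hUQ⟩ := @exists_periodic_hasDerivAt_eq_mul_exp_smul _
    Matrix.linftyOpNormedRing _ _ _ _ Matrix.linftyOpNormedAlgebra
    (inferInstanceAs (CompleteSpace (Fin N → Fin N → ℂ))) hf hfper hU0 hUode hΩ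
  have hQ : Continuous Q := continuous_iff_continuousAt.2 fun θ => (hQ' θ).continuousAt
  refine ⟨Q, hQper, hQ0, contDiff_one_iff_deriv.2 ⟨fun θ => (hQ' θ).differentiableAt, ?_⟩, hUQ⟩
  rw [funext fun θ => (hQ' θ).deriv]
  exact (hf.mul hQ).sub (hQ.mul continuous_const)

/-- **complex Floquet theorem.** Let `f : ℝ → M_N(ℂ)` be continuous and
`P`-periodic, and let `U` solve `U' = f(θ) U`, `U(0) = Id`.  Given a logarithm `Ω` of
the monodromy matrix, `U(P) = e^{PΩ}` (always possible over `ℂ`), there exists a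
`P`-periodic continuously differentiable matrix function `Q` with `Q(0) = Id` and
`U(θ) = Q(θ) e^{θΩ}`. -/
theorem stmt_17 (N : ℕ) (P : ℝ) (hP : 0 < P)
    (f : ℝ → Matrix (Fin N) (Fin N) ℂ) (hf : Continuous f)
    (hfper : ∀ θ, f (θ + P) = f θ)
    (U : ℝ → Matrix (Fin N) (Fin N) ℂ) (hU0 : U 0 = 1)
    (hUode : ∀ θ, HasDerivAt U (f θ * U θ) θ)
    (Ω : Matrix (Fin N) (Fin N) ℂ) (hΩ : U P = NormedSpace.exp (P • Ω)) :
    ∃ Q : ℝ → Matrix (Fin N) (Fin N) ℂ,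
      (∀ θ, Q (θ + P) = Q θ) ∧ Q 0 = 1 ∧ ContDiff ℝ 1 Q ∧
      ∀ θ, U θ = Q θ * NormedSpace.exp (θ • Ω) :=
  stmt_17_general N P f hf hfper U hU0 hUode Ω hΩ
end
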